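/- Insertion sort is correct and optimal in adjacent swaps: for any list A of n distinct elements of a linear order, the insertion sort procedure — which, for i ranging from the first index to the last, repeatedly swaps the element at position j with the element at position j−1 (starting from j = i and decrementing j) while j exceeds the first index and A[j] < A[j−1] — terminates with A sorted in ascending order, and the total number of swaps it performs equals the number of inversions of the original list. -/

import Mathlib

variable {α : Type*} [LinearOrder α]

/-- Insert `x` into the (sorted) prefix list by repeatedly swapping it with its left
neighbour while it is smaller, returning the resulting list together with the number of
adjacent swaps performed.  Viewing the prefix from the left: `x` ends up just before the
first element greater than it, and each element it passes costs one swap. -/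
def insertSwap (x : α) : List α → List α × ℕ
  | [] => ([x], 0)
  | a :: t =>
    if x < a then (x :: a :: t, t.length + 1)
    else
      let r := insertSwap x t
      (a :: r.1, r.2)

/-- Insertion sort, counting adjacent swaps: for `i` from the first index to the last,
insert `A[i]` into the already-sorted prefix by adjacent swaps (while `j > low` and
`A[j] < A[j-1]`, swap `A[j]` and `A[j-1]` and decrement `j`).  Returns the sorted list
and the total number of swaps performed. -/
def insertionSortSwap (l : List α) : List α × ℕ :=
  l.foldl (fun acc x => ((insertSwap x acc.1).1, acc.2 + (insertSwap x acc.1).2)) ([], 0)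

/-- The number of inversions of a list: pairs of positions `(i, j)` with `i < j` and
`A[i] > A[j]`. -/
def listInv (l : List α) : ℕ :=
  ((Finset.univ : Finset (Fin l.length × Fin l.length)).filter
    fun p => p.1 < p.2 ∧ l.get p.2 < l.get p.1).card

/-! Inserting `x` into a sorted list by adjacent swaps costs one swap for each element
greater than `x`; in insertion sort these are exactly the earlier elements of the input that
form an inversion with `x`. Summing over the inserted elements gives the inversion count,
via the recursion `listInv (l ++ [x]) = listInv l + #{a ∈ l | x < a}`. -/

lemma List.countP_eq_sum_fin {β : Type*} (p : β → Bool) (t : List β) :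
    t.countP p = ∑ j : Fin t.length, if p (t.get j) then 1 else 0 := by
  induction t with
  | nil => simp
  | cons a t ih =>
    simp only [List.length_cons]
    rw [List.countP_cons, Fin.sum_univ_succ, ih, add_comm]
    rfl

lemma listInv_eq_sum (l : List α) :
    listInv l = ∑ i : Fin l.length, ∑ j : Fin l.length,
      if i < j ∧ l.get j < l.get i then 1 else 0 := by
  rw [listInv, Finset.card_filter, Fintype.sum_prod_type]

lemma listInv_cons (a : α) (t : List α) :
    listInv (a :: t) = t.countP (· < a) + listInv t := by
  simp only [listInv_eq_sum, List.length_cons, Fin.sum_univ_succ, List.countP_eq_sum_fin]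
  simp [Fin.succ_pos, Fin.succ_lt_succ_iff]

lemma listInv_concat (l : List α) (x : α) :
    listInv (l ++ [x]) = listInv l + l.countP (x < ·) := by
  induction l with
  | nil => rfl
  | cons a t ih =>
    simp only [List.cons_append, listInv_cons, ih, List.countP_append, List.countP_cons,
      List.countP_nil]
    split_ifs <;> omega

lemma insertSwap_fst_perm (x : α) (s : List α) : (insertSwap x s).1.Perm (x :: s) := by
  induction s with
  | nil => simp [insertSwap]
  | cons a t ih =>
    unfold insertSwap
    split_ifs
    · rfl
    · exact (ih.cons a).trans (.swap x a t)

lemma pairwise_insertSwap_fst (x : α) {s : List α} (hs : s.Pairwise (· ≤ ·)) :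
    (insertSwap x s).1.Pairwise (· ≤ ·) := by
  induction s with
  | nil => simp [insertSwap]
  | cons a t ih =>
    obtain ⟨ha, ht⟩ := List.pairwise_cons.1 hs
    unfold insertSwap
    split_ifs with hxa
    · exact .cons (List.forall_mem_cons.2 ⟨hxa.le, fun b hb => hxa.le.trans (ha b hb)⟩) hs
    · refine .cons (fun b hb => ?_) (ih ht)
      rcases List.mem_cons.1 ((insertSwap_fst_perm x t).mem_iff.1 hb) with rfl | hb
      · exact not_lt.1 hxa
      · exact ha b hb

lemma insertSwap_snd (x : α) {s : List α} (hs : s.Pairwise (· ≤ ·)) :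
    (insertSwap x s).2 = s.countP (x < ·) := by
  induction s with
  | nil => simp [insertSwap]
  | cons a t ih =>
    obtain ⟨ha, ht⟩ := List.pairwise_cons.1 hs
    unfold insertSwap
    split_ifs with hxa
    · have hall : t.countP (x < ·) = t.length :=
        List.countP_eq_length.2 fun b hb => decide_eq_true (hxa.trans_le (ha b hb))
      simp [hxa, hall]
    · simp [hxa, ih ht]

lemma insertionSortSwap_concat (l : List α) (x : α) :
    insertionSortSwap (l ++ [x]) =
      ((insertSwap x (insertionSortSwap l).1).1,
        (insertionSortSwap l).2 + (insertSwap x (insertionSortSwap l).1).2) := by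
  simp [insertionSortSwap, List.foldl_append]

lemma insertionSortSwap_fst_perm (l : List α) : (insertionSortSwap l).1.Perm l := by
  induction l using List.reverseRecOn with
  | nil => rfl
  | append_singleton l x ih =>
    rw [insertionSortSwap_concat]
    exact (insertSwap_fst_perm x _).trans ((ih.cons x).trans (List.perm_append_singleton x l).symm)

lemma pairwise_insertionSortSwap_fst (l : List α) :
    (insertionSortSwap l).1.Pairwise (· ≤ ·) := by
  induction l using List.reverseRecOn with
  | nil => exact .nil
  | append_singleton l x ih =>
    rw [insertionSortSwap_concat]
    exact pairwise_insertSwap_fst x ih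

lemma insertionSortSwap_snd (l : List α) : (insertionSortSwap l).2 = listInv l := by
  induction l using List.reverseRecOn with
  | nil => rfl
  | append_singleton l x ih =>
    rw [insertionSortSwap_concat, insertSwap_snd x (pairwise_insertionSortSwap_fst l),
      (insertionSortSwap_fst_perm l).countP_eq, ih, listInv_concat]

theorem insertionSortSwap_correct_general (l : List α) :
    (insertionSortSwap l).1.Pairwise (· ≤ ·) ∧
    (insertionSortSwap l).1.Perm l ∧
    (insertionSortSwap l).2 = listInv l :=
  ⟨pairwise_insertionSortSwap_fst l, insertionSortSwap_fst_perm l, insertionSortSwap_snd l⟩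

/-- Insertion sort is correct and optimal in adjacent swaps: on a list of distinct
elements it terminates with the list sorted in ascending order (a permutation of the
original list), and the total number of adjacent swaps it performs equals the number of
inversions of the original list. -/
theorem insertionSortSwap_correct (l : List α) (hl : l.Nodup) :
    (insertionSortSwap l).1.Pairwise (· ≤ ·) ∧
    (insertionSortSwap l).1.Perm l ∧
    (insertionSortSwap l).2 = listInv l :=
  insertionSortSwap_correct_general l
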